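/- arXiv:2512.23190 — 2 statements merged into one kernel-verified Lean document; each statement's English description precedes it below -/
import Mathlib

section
/- Consider a run of LightONS.Core over T rounds on the domain X. Then all iterates x_t lie in X̃ = B(kD/2), and the number N of rounds t ∈ {1,…,T} at which a Mahalanobis projection is performed satisfies N ≤ (2/((k − 1)·D·γ))·√(d·T/ε), where γ = (1/2)·min{2/((k+1)DG), α}. -/
open scoped RealInnerProductSpace

noncomputable def mApp {d : ℕ} (A : Matrix (Fin d) (Fin d) ℝ) (x : EuclideanSpace ℝ (Fin d)) :
    EuclideanSpace ℝ (Fin d) :=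
  Matrix.toEuclideanLin A x

noncomputable def quadForm {d : ℕ} (A : Matrix (Fin d) (Fin d) ℝ) (x : EuclideanSpace ℝ (Fin d)) : ℝ :=
  ⟪x, mApp A x⟫

noncomputable def mnorm {d : ℕ} (A : Matrix (Fin d) (Fin d) ℝ) (x : EuclideanSpace ℝ (Fin d)) : ℝ :=
  Real.sqrt (quadForm A x)

/-- `p` is a Mahalanobis projection of `y` onto `C` with respect to `A`. -/
def IsMProj {d : ℕ} (A : Matrix (Fin d) (Fin d) ℝ) (C : Set (EuclideanSpace ℝ (Fin d)))
    (y p : EuclideanSpace ℝ (Fin d)) : Prop :=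
  p ∈ C ∧ ∀ z ∈ C, mnorm A (p - y) ≤ mnorm A (z - y)

/-- The outer product `v vᵀ` of a vector with itself. -/
noncomputable def outerProd {d : ℕ} (v : EuclideanSpace ℝ (Fin d)) : Matrix (Fin d) (Fin d) ℝ :=
  Matrix.of (fun i j => v i * v j)

section Aux
open Matrix
variable {d : ℕ}

lemma LightONS.trace_helper (M N : Matrix (Fin d) (Fin d) ℝ) (u : Fin d → ℝ) :
    (M * vecMulVec u u * N).trace = (M *ᵥ u) ⬝ᵥ (u ᵥ* N) := by
  simp only [Matrix.trace, Matrix.diag_apply, Matrix.mul_apply, vecMulVec_apply,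
    Matrix.mulVec, Matrix.vecMul, dotProduct, Finset.sum_mul, Finset.mul_sum,
    Finset.sum_mul_sum]
  refine Finset.sum_congr rfl fun l _ => ?_
  refine Finset.sum_congr rfl fun j _ => Finset.sum_congr rfl fun i _ => by ring

lemma LightONS.vecMulVec_mulVec' (u x : Fin d → ℝ) : vecMulVec u u *ᵥ x = (u ⬝ᵥ x) • u := by
  ext i
  simp only [Matrix.mulVec, vecMulVec_apply, dotProduct, Pi.smul_apply, smul_eq_mul,
    Finset.sum_mul, Finset.mul_sum]
  exact Finset.sum_congr rfl fun j _ => by ring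

lemma LightONS.posSemidef_vecMulVec (u : Fin d → ℝ) : (vecMulVec u u).PosSemidef := by
  refine Matrix.PosSemidef.of_dotProduct_mulVec_nonneg ?_ ?_
  · ext i j
    simp [Matrix.conjTranspose, vecMulVec_apply, mul_comm]
  · intro y
    rw [LightONS.vecMulVec_mulVec']
    simp only [star_trivial, dotProduct_smul, smul_eq_mul]
    rw [dotProduct_comm]
    exact mul_self_nonneg _

lemma LightONS.key_step (A : Matrix (Fin d) (Fin d) ℝ) (hA : A.PosDef) (u : Fin d → ℝ) :
    ((A + vecMulVec u u)⁻¹ *ᵥ u) ⬝ᵥ ((A + vecMulVec u u)⁻¹ *ᵥ u)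
      ≤ A⁻¹.trace - (A + vecMulVec u u)⁻¹.trace := by
  set B := A + vecMulVec u u with hBdef
  have hB : B.PosDef := hA.add_posSemidef (LightONS.posSemidef_vecMulVec u)
  have hAdet : IsUnit A.det := hA.det_pos.ne'.isUnit
  have hBdet : IsUnit B.det := hB.det_pos.ne'.isUnit
  by_cases hu : u = 0
  · subst hu
    have hG : (vecMulVec (0 : Fin d → ℝ) (0 : Fin d → ℝ) : Matrix (Fin d) (Fin d) ℝ) = 0 := by
      ext i j; simp [vecMulVec_apply]
    simp [hBdef, hG, mulVec_zero]
  set w := B⁻¹ *ᵥ u with hwdef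
  have hBw : B *ᵥ w = u := by
    rw [hwdef, mulVec_mulVec, Matrix.mul_nonsing_inv _ hBdet, one_mulVec]
  set s := u ⬝ᵥ w with hsdef
  have hu_eq : u = A *ᵥ w + s • u := by
    conv_lhs => rw [← hBw]
    rw [hBdef, add_mulVec, LightONS.vecMulVec_mulVec']
  have hw0 : w ≠ 0 := by
    intro h
    rw [h, mulVec_zero] at hBw
    exact hu hBw.symm
  have hwAw : 0 < w ⬝ᵥ (A *ᵥ w) := by simpa using hA.dotProduct_mulVec_pos hw0
  have hws : w ⬝ᵥ u = s := by rw [hsdef, dotProduct_comm]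
  have hs_eq : s = w ⬝ᵥ (A *ᵥ w) + s * s := by
    conv_lhs => rw [← hws, hu_eq]
    rw [dotProduct_add, dotProduct_smul, smul_eq_mul, hws]
  have hs0 : 0 ≤ s := by simpa [hwdef] using hB.posSemidef.inv.dotProduct_mulVec_nonneg u
  have hs1 : s < 1 := by nlinarith
  have hAu : (1 - s) • (A⁻¹ *ᵥ u) = w := by
    have h1 : A⁻¹ *ᵥ u = w + s • (A⁻¹ *ᵥ u) := by
      conv_lhs => rw [hu_eq]
      rw [mulVec_add, mulVec_smul, mulVec_mulVec, Matrix.nonsing_inv_mul _ hAdet, one_mulVec]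
    rw [sub_smul, one_smul]
    nth_rewrite 1 [h1]
    abel
  have hdiff : A⁻¹ - B⁻¹ = A⁻¹ * vecMulVec u u * B⁻¹ := by
    have hG : vecMulVec u u = B - A := by rw [hBdef]; abel
    rw [hG, mul_sub, sub_mul, Matrix.mul_assoc, Matrix.mul_nonsing_inv _ hBdet,
      Matrix.mul_one, Matrix.nonsing_inv_mul _ hAdet, Matrix.one_mul]
  have hsymmB : u ᵥ* B⁻¹ = w := by
    have hT := hB.posSemidef.inv.isHermitian
    rw [Matrix.IsHermitian, Matrix.conjTranspose_eq_transpose_of_trivial] at hT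
    rw [← Matrix.mulVec_transpose, hT]
  have htr : A⁻¹.trace - B⁻¹.trace = (A⁻¹ *ᵥ u) ⬝ᵥ w := by
    rw [← Matrix.trace_sub, hdiff, LightONS.trace_helper, hsymmB]
  have hww : 0 ≤ w ⬝ᵥ w := Finset.sum_nonneg fun i _ => mul_self_nonneg _
  have hkey : (1 - s) * ((A⁻¹ *ᵥ u) ⬝ᵥ w) = w ⬝ᵥ w := by
    rw [← smul_eq_mul, ← smul_dotProduct, hAu]
  rw [htr]
  nlinarith [hkey, hww, hs0, hs1]

lemma LightONS.norm_sq_eq_dot (x : EuclideanSpace ℝ (Fin d)) :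
    ‖x‖ ^ 2 = dotProduct (x : Fin d → ℝ) (x : Fin d → ℝ) := by
  rw [EuclideanSpace.norm_eq, Real.sq_sqrt (by positivity)]
  simp [dotProduct, sq]

lemma LightONS.outerProd_eq (v : EuclideanSpace ℝ (Fin d)) :
    outerProd v = vecMulVec (v : Fin d → ℝ) (v : Fin d → ℝ) := rfl

lemma LightONS.key_step' (M : Matrix (Fin d) (Fin d) ℝ) (hM : M.PosDef)
    (v : EuclideanSpace ℝ (Fin d)) :
    ‖mApp (M + outerProd v)⁻¹ v‖ ^ 2 ≤ M⁻¹.trace - (M + outerProd v)⁻¹.trace := by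
  rw [LightONS.norm_sq_eq_dot, LightONS.outerProd_eq]
  exact LightONS.key_step M hM (v : Fin d → ℝ)

lemma LightONS.trace_nonneg (M : Matrix (Fin d) (Fin d) ℝ) (h : M.PosSemidef) :
    0 ≤ M.trace := by
  apply Finset.sum_nonneg; intro i _
  have := h.dotProduct_mulVec_nonneg (Pi.single i 1)
  simpa [Matrix.mulVec_single, dotProduct, Pi.single_apply, Finset.sum_ite_eq'] using this

lemma LightONS.posSemidef_outerProd (v : EuclideanSpace ℝ (Fin d)) :
    (outerProd v).PosSemidef := by
  rw [LightONS.outerProd_eq]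
  exact LightONS.posSemidef_vecMulVec _

end Aux

theorem stmt_4' {d T : ℕ}
    (X : Set (EuclideanSpace ℝ (Fin d)))
    (D k γ : ℝ) (hD : 0 < D) (hk : 1 < k) (hγpos : 0 < γ)
    (hXball : ∀ x ∈ X, ‖x‖ ≤ D / 2)
    (x xhat w : ℕ → EuclideanSpace ℝ (Fin d))
    (hx0 : x 0 = 0)
    (hxw : ∀ t < T, xhat (t+1) = x t - (1/γ) • w t)
    (hupd₁ : ∀ t < T, ‖xhat (t+1)‖ ≤ k*D/2 → x (t+1) = xhat (t+1))
    (hupd₂ : ∀ t < T, ¬ (‖xhat (t+1)‖ ≤ k*D/2) → x (t+1) ∈ X) :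
    ((((Finset.range T).filter (fun t => ¬ (‖xhat (t+1)‖ ≤ k*D/2))).card : ℝ) * ((k-1)*D/2)
      ≤ (1/γ) * ∑ t ∈ Finset.range T, ‖w t‖) := by
  classical
  have hstep : ∀ t ∈ Finset.range T, ‖x (t+1)‖ - ‖x t‖ ≤
      (1/γ) * ‖w t‖ - (if ¬ (‖xhat (t+1)‖ ≤ k*D/2) then ((k-1)*D/2) else 0) := by
    intro t ht
    rw [Finset.mem_range] at ht
    have hδ : ‖xhat (t+1) - x t‖ = (1/γ) * ‖w t‖ := by
      rw [hxw t ht, sub_sub_cancel_left, norm_neg, norm_smul, Real.norm_eq_abs,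
        abs_of_pos (by positivity)]
    by_cases hp : ‖xhat (t+1)‖ ≤ k*D/2
    · rw [if_neg (not_not_intro hp), sub_zero]
      calc ‖x (t+1)‖ - ‖x t‖ ≤ ‖x (t+1) - x t‖ := norm_sub_norm_le _ _
        _ = ‖xhat (t+1) - x t‖ := by rw [hupd₁ t ht hp]
        _ = (1/γ) * ‖w t‖ := hδ
    · rw [if_pos hp]
      have h2 : ‖x (t+1)‖ ≤ D/2 := hXball _ (hupd₂ t ht hp)
      push_neg at hp
      have h3 : ‖xhat (t+1)‖ ≤ ‖x t‖ + ‖xhat (t+1) - x t‖ := by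
        have h4 := norm_add_le (x t) (xhat (t+1) - x t)
        simpa using h4
      rw [hδ] at h3
      linarith
  have htel : ∑ t ∈ Finset.range T, (‖x (t+1)‖ - ‖x t‖) = ‖x T‖ - ‖x 0‖ :=
    Finset.sum_range_sub (fun t => ‖x t‖) T
  have hsum := Finset.sum_le_sum hstep
  rw [htel, Finset.sum_sub_distrib, ← Finset.sum_filter, Finset.sum_const,
    ← Finset.mul_sum, nsmul_eq_mul] at hsum
  have hxT : 0 ≤ ‖x T‖ := norm_nonneg _
  rw [hx0, norm_zero] at hsum
  linarith


/-- projection count of LightONS.Core.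
Rounds are indexed by `t ∈ {0, …, T-1}` (round `t+1` in the paper); the iterate `x t` is the
paper's `x_{t+1}`, and `A t` is the paper's `A_t` (so `A (t+1)` is the matrix used in round
`t+1`). -/
theorem stmt_4 {d T : ℕ}
    (X : Set (EuclideanSpace ℝ (Fin d))) (hne : X.Nonempty) (hcmp : IsCompact X)
    (hconv : Convex ℝ X)
    (D G α ε k : ℝ) (hD : 0 < D) (hG : 0 < G) (hα : 0 < α) (hε : 0 < ε) (hk : 1 < k)
    (hdiam : ∀ x ∈ X, ∀ y ∈ X, ‖x - y‖ ≤ D)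
    (hXball : ∀ x ∈ X, ‖x‖ ≤ D / 2)
    (f : ℕ → EuclideanSpace ℝ (Fin d) → ℝ)
    (g : ℕ → EuclideanSpace ℝ (Fin d) → EuclideanSpace ℝ (Fin d))
    (hexp : ∀ t < T, ConcaveOn ℝ (Metric.closedBall (0 : EuclideanSpace ℝ (Fin d)) (k*D/2))
      (fun z => Real.exp (-α * f t z)))
    (hgrad : ∀ t < T, ∀ z ∈ Metric.closedBall (0 : EuclideanSpace ℝ (Fin d)) (k*D/2),
      HasGradientAt (f t) (g t z) z)
    (hgbound : ∀ t < T, ∀ z ∈ Metric.closedBall (0 : EuclideanSpace ℝ (Fin d)) (k*D/2),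
      ‖g t z‖ ≤ G)
    (γ : ℝ) (hγ : γ = (1/2) * min (2 / ((k+1)*D*G)) α)
    (x xhat : ℕ → EuclideanSpace ℝ (Fin d)) (A : ℕ → Matrix (Fin d) (Fin d) ℝ)
    (hx0 : x 0 = 0)
    (hA0 : A 0 = ε • (1 : Matrix (Fin d) (Fin d) ℝ))
    (hAstep : ∀ t < T, A (t+1) = A t + outerProd (g t (x t)))
    (hxhat : ∀ t < T, xhat (t+1) = x t - (1/γ) • mApp (A (t+1))⁻¹ (g t (x t)))
    (hupd₁ : ∀ t < T, ‖xhat (t+1)‖ ≤ k*D/2 → x (t+1) = xhat (t+1))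
    (hupd₂ : ∀ t < T, ¬ (‖xhat (t+1)‖ ≤ k*D/2) → IsMProj (A (t+1)) X (xhat (t+1)) (x (t+1))) :
    (∀ t ≤ T, ‖x t‖ ≤ k*D/2) ∧
    ((((Finset.range T).filter (fun t => ¬ (‖xhat (t+1)‖ ≤ k*D/2))).card : ℝ)
      ≤ (2 / ((k - 1) * D * γ)) * Real.sqrt (d * T / ε)) := by
  have hγpos : 0 < γ := by
    rw [hγ]
    have h1 : 0 < 2 / ((k+1)*D*G) := by
      apply div_pos two_pos
      have : (0:ℝ) < k + 1 := by linarith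
      positivity
    have h2 := lt_min h1 hα
    linarith
  -- Part 1
  have part1 : ∀ t ≤ T, ‖x t‖ ≤ k*D/2 := by
    intro t ht
    cases t with
    | zero => rw [hx0, norm_zero]; nlinarith
    | succ s =>
      have hs : s < T := ht
      by_cases hp : ‖xhat (s+1)‖ ≤ k*D/2
      · rw [hupd₁ s hs hp]; exact hp
      · have h2 := hXball _ (hupd₂ s hs hp).1
        nlinarith
  refine ⟨part1, ?_⟩
  -- positive definiteness
  have hPD : ∀ t, t ≤ T → (A t).PosDef := by
    intro t
    induction t with
    | zero =>
      intro _
      rw [hA0, Matrix.smul_one_eq_diagonal]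
      exact Matrix.PosDef.diagonal fun _ => hε
    | succ s ih =>
      intro hst
      have hs : s < T := hst
      rw [hAstep s hs]
      exact (ih hs.le).add_posSemidef (LightONS.posSemidef_outerProd _)
  set w : ℕ → EuclideanSpace ℝ (Fin d) := fun t => mApp (A (t+1))⁻¹ (g t (x t)) with hw
  -- sum of squares bound
  have hsumsq : ∑ t ∈ Finset.range T, ‖w t‖^2 ≤ (d : ℝ) / ε := by
    have h1 : ∀ t ∈ Finset.range T, ‖w t‖^2 ≤ (A t)⁻¹.trace - (A (t+1))⁻¹.trace := by
      intro t ht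
      rw [Finset.mem_range] at ht
      have h5 := LightONS.key_step' (A t) (hPD t ht.le) (g t (x t))
      rw [← hAstep t ht] at h5
      exact h5
    have h2 : ∑ t ∈ Finset.range T, ((A t)⁻¹.trace - (A (t+1))⁻¹.trace)
        = (A 0)⁻¹.trace - (A T)⁻¹.trace := Finset.sum_range_sub' (fun t => (A t)⁻¹.trace) T
    have h3 : 0 ≤ (A T)⁻¹.trace := LightONS.trace_nonneg _ (hPD T le_rfl).inv.posSemidef
    have h4 : (A 0)⁻¹.trace = (d : ℝ) / ε := by
      rw [hA0]
      have hinv : (ε • (1 : Matrix (Fin d) (Fin d) ℝ))⁻¹ = ε⁻¹ • 1 := by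
        apply Matrix.inv_eq_right_inv
        rw [Matrix.smul_mul, Matrix.mul_smul, smul_smul, mul_inv_cancel₀ hε.ne',
          Matrix.one_mul, one_smul]
      rw [hinv, Matrix.trace_smul, Matrix.trace_one]
      simp [div_eq_mul_inv, mul_comm]
    calc ∑ t ∈ Finset.range T, ‖w t‖^2
        ≤ ∑ t ∈ Finset.range T, ((A t)⁻¹.trace - (A (t+1))⁻¹.trace) := Finset.sum_le_sum h1
      _ = (A 0)⁻¹.trace - (A T)⁻¹.trace := h2
      _ ≤ (d:ℝ)/ε := by rw [h4]; linarith
  -- sum of norms bound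
  have hsumn : ∑ t ∈ Finset.range T, ‖w t‖ ≤ Real.sqrt ((d : ℝ) * T / ε) := by
    apply Real.le_sqrt_of_sq_le
    calc (∑ t ∈ Finset.range T, ‖w t‖)^2
        ≤ (Finset.range T).card * ∑ t ∈ Finset.range T, ‖w t‖^2 := sq_sum_le_card_mul_sum_sq
      _ = (T : ℝ) * ∑ t ∈ Finset.range T, ‖w t‖^2 := by rw [Finset.card_range]
      _ ≤ (T : ℝ) * ((d:ℝ)/ε) := mul_le_mul_of_nonneg_left hsumsq (by positivity)
      _ = (d:ℝ) * T / ε := by ring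
  -- telescoping count bound
  have hcount := stmt_4' X D k γ hD hk hγpos hXball x xhat w hx0
    (fun t ht => hxhat t ht) hupd₁ (fun t ht hp => (hupd₂ t ht hp).1)
  set N : ℝ := (((Finset.range T).filter (fun t => ¬ (‖xhat (t+1)‖ ≤ k*D/2))).card : ℝ)
  have hc : (0:ℝ) < (k-1)*D/2 := by nlinarith
  have hfin : N * ((k-1)*D/2) ≤ (1/γ) * Real.sqrt ((d:ℝ) * T / ε) := by
    calc N * ((k-1)*D/2) ≤ (1/γ) * ∑ t ∈ Finset.range T, ‖w t‖ := hcount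
      _ ≤ (1/γ) * Real.sqrt ((d:ℝ) * T / ε) := by
          apply mul_le_mul_of_nonneg_left hsumn (by positivity)
  have hNle : N ≤ ((1/γ) * Real.sqrt ((d:ℝ) * T / ε)) / ((k-1)*D/2) :=
    (le_div_iff₀ hc).mpr hfin
  calc N ≤ ((1/γ) * Real.sqrt ((d:ℝ) * T / ε)) / ((k-1)*D/2) := hNle
    _ = (2 / ((k - 1) * D * γ)) * Real.sqrt ((d:ℝ) * T / ε) := by
        field_simp
end

section
/- Let A ∈ ℝ^{d×d} be a positive-definite symmetric matrix with smallest eigenvalue λ_min, let y ∈ ℝ^d, and let μ, ν ≥ 0. Then ‖(A + μI)⁻¹Ay − (A + νI)⁻¹Ay‖ ≤ (|μ − ν|/λ_min)·‖y‖. -/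
open scoped RealInnerProductSpace
open scoped Matrix

lemma mApp_mul {d : ℕ} (M N : Matrix (Fin d) (Fin d) ℝ) (x : EuclideanSpace ℝ (Fin d)) :
    mApp (M * N) x = mApp M (mApp N x) := by
  simp [mApp, Matrix.toEuclideanLin_apply, Matrix.mulVec_mulVec]

lemma mApp_one {d : ℕ} (x : EuclideanSpace ℝ (Fin d)) : mApp 1 x = x := by
  simp [mApp, Matrix.toEuclideanLin_apply]

lemma mApp_smul {d : ℕ} (M : Matrix (Fin d) (Fin d) ℝ) (c : ℝ) (x : EuclideanSpace ℝ (Fin d)) :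
    mApp M (c • x) = c • mApp M x := by
  simp [mApp]

lemma mApp_sum {d n : ℕ} (M : Matrix (Fin d) (Fin d) ℝ) (f : Fin n → EuclideanSpace ℝ (Fin d)) :
    mApp M (∑ i, f i) = ∑ i, mApp M (f i) := by
  simp [mApp]

lemma posdef_shift {d : ℕ} {A : Matrix (Fin d) (Fin d) ℝ} (hA : A.PosDef) {t : ℝ} (ht : 0 ≤ t) :
    (A + t • (1 : Matrix (Fin d) (Fin d) ℝ)).PosDef := by
  refine hA.add_posSemidef ?_
  have : (t • (1 : Matrix (Fin d) (Fin d) ℝ)) = Matrix.diagonal (fun _ => t) := by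
    ext i j; by_cases h : i = j <;> simp [Matrix.diagonal, Matrix.one_apply, h]
  rw [this]
  exact Matrix.posSemidef_diagonal_iff.mpr fun i => ht

lemma mApp_eigen {d : ℕ} {A : Matrix (Fin d) (Fin d) ℝ} (hA : A.PosDef) {t : ℝ} (ht : 0 ≤ t)
    (i : Fin d) :
    mApp (A + t • (1 : Matrix (Fin d) (Fin d) ℝ)) (hA.1.eigenvectorBasis i)
      = (hA.1.eigenvalues i + t) • hA.1.eigenvectorBasis i := by
  have h2 : ∀ k, (A *ᵥ (hA.1.eigenvectorBasis i : Fin d → ℝ)) k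
      = hA.1.eigenvalues i * hA.1.eigenvectorBasis i k := fun k => by
    have := congrFun (hA.1.mulVec_eigenvectorBasis i) k
    simpa using this
  ext j
  have : mApp (A + t • 1) (hA.1.eigenvectorBasis i) j
      = ((A + t • (1:Matrix (Fin d) (Fin d) ℝ)) *ᵥ (hA.1.eigenvectorBasis i : Fin d → ℝ)) j := rfl
  rw [this, Matrix.add_mulVec, Matrix.smul_mulVec, Matrix.one_mulVec]
  have hg : ((hA.1.eigenvalues i + t) • hA.1.eigenvectorBasis i) j
      = (hA.1.eigenvalues i + t) * hA.1.eigenvectorBasis i j := rfl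
  rw [hg]
  simp only [Pi.add_apply, Pi.smul_apply, smul_eq_mul, h2]
  ring

lemma mApp_inv_eigen {d : ℕ} {A : Matrix (Fin d) (Fin d) ℝ} (hA : A.PosDef) {t : ℝ} (ht : 0 ≤ t)
    (i : Fin d) :
    mApp (A + t • (1 : Matrix (Fin d) (Fin d) ℝ))⁻¹ (hA.1.eigenvectorBasis i)
      = (hA.1.eigenvalues i + t)⁻¹ • hA.1.eigenvectorBasis i := by
  set M := A + t • (1 : Matrix (Fin d) (Fin d) ℝ) with hM
  have hP : M.PosDef := posdef_shift hA ht
  have hdet : IsUnit M.det := hP.det_pos.ne'.isUnit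
  have hpos : 0 < hA.1.eigenvalues i + t := add_pos_of_pos_of_nonneg (hA.eigenvalues_pos i) ht
  have h1 : mApp M⁻¹ (mApp M (hA.1.eigenvectorBasis i)) = hA.1.eigenvectorBasis i := by
    rw [← mApp_mul, Matrix.nonsing_inv_mul M hdet, mApp_one]
  rw [mApp_eigen hA ht, mApp_smul] at h1
  have h2 := congrArg (fun v => (hA.1.eigenvalues i + t)⁻¹ • v) h1
  simpa [smul_smul, inv_mul_cancel₀ hpos.ne'] using h2

lemma mApp_A_eigen {d : ℕ} {A : Matrix (Fin d) (Fin d) ℝ} (hA : A.PosDef) (i : Fin d) :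
    mApp A (hA.1.eigenvectorBasis i) = hA.1.eigenvalues i • hA.1.eigenvectorBasis i := by
  have := mApp_eigen hA (le_refl 0) i
  simpa using this

lemma key_formula {d : ℕ} {A : Matrix (Fin d) (Fin d) ℝ} (hA : A.PosDef) {t : ℝ} (ht : 0 ≤ t)
    (y : EuclideanSpace ℝ (Fin d)) :
    mApp (A + t • (1 : Matrix (Fin d) (Fin d) ℝ))⁻¹ (mApp A y)
      = ∑ i, ((hA.1.eigenvalues i / (hA.1.eigenvalues i + t)) * hA.1.eigenvectorBasis.repr y i)
          • hA.1.eigenvectorBasis i := by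
  conv_lhs => rw [← hA.1.eigenvectorBasis.sum_repr y]
  rw [mApp_sum, mApp_sum]
  refine Finset.sum_congr rfl fun i _ => ?_
  rw [mApp_smul, mApp_A_eigen hA, mApp_smul, mApp_smul, mApp_inv_eigen hA ht, smul_smul,
    smul_smul]
  congr 1
  field_simp

/-- Lipschitz dependence of `(A + μI)⁻¹Ay` on `μ`. -/
theorem stmt_14 {d : ℕ} (A : Matrix (Fin d) (Fin d) ℝ) (hA : A.PosDef)
    (lmin : ℝ) (hlmin : IsLeast (Set.range hA.1.eigenvalues) lmin)
    (y : EuclideanSpace ℝ (Fin d)) (μ ν : ℝ) (hμ : 0 ≤ μ) (hν : 0 ≤ ν) :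
    ‖mApp (A + μ • (1 : Matrix (Fin d) (Fin d) ℝ))⁻¹ (mApp A y)
      - mApp (A + ν • (1 : Matrix (Fin d) (Fin d) ℝ))⁻¹ (mApp A y)‖
      ≤ (|μ - ν| / lmin) * ‖y‖ := by
  have hlpos : 0 < lmin := by
    obtain ⟨i, hi⟩ := hlmin.1
    exact hi ▸ hA.eigenvalues_pos i
  have hlle : ∀ i, lmin ≤ hA.1.eigenvalues i := fun i => hlmin.2 ⟨i, rfl⟩
  set K := |μ - ν| / lmin with hK
  have hK0 : 0 ≤ K := div_nonneg (abs_nonneg _) hlpos.le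
  set lam := hA.1.eigenvalues with hlamdef
  set B := hA.1.eigenvectorBasis with hBdef
  set g : Fin d → ℝ := fun i => lam i / (lam i + μ) - lam i / (lam i + ν) with hg
  set c : Fin d → ℝ := fun i => B.repr y i with hc
  have hgbound : ∀ i, |g i| ≤ K := by
    intro i
    have ha : 0 < lam i := hA.eigenvalues_pos i
    have haμ : 0 < lam i + μ := add_pos_of_pos_of_nonneg ha hμ
    have haν : 0 < lam i + ν := add_pos_of_pos_of_nonneg ha hν
    have e : g i = lam i * (ν - μ) / ((lam i + μ) * (lam i + ν)) := by
      rw [hg]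
      field_simp
      ring
    have h1 : lam i * lmin ≤ (lam i + μ) * (lam i + ν) :=
      mul_le_mul (le_add_of_nonneg_right hμ)
        (le_trans (hlle i) (le_add_of_nonneg_right hν)) hlpos.le haμ.le
    have h2 : |lam i * (ν - μ) / ((lam i + μ) * (lam i + ν))|
        = lam i * |ν - μ| / ((lam i + μ) * (lam i + ν)) := by
      rw [abs_div, abs_mul, abs_of_pos ha, abs_of_pos (mul_pos haμ haν)]
    rw [e, h2]
    have h3 : lam i * |ν - μ| / ((lam i + μ) * (lam i + ν))
        ≤ lam i * |ν - μ| / (lam i * lmin) :=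
      div_le_div_of_nonneg_left (by positivity) (mul_pos ha hlpos) h1
    calc lam i * |ν - μ| / ((lam i + μ) * (lam i + ν))
        ≤ lam i * |ν - μ| / (lam i * lmin) := h3
      _ = |ν - μ| / lmin := mul_div_mul_left _ _ ha.ne'
      _ = K := by rw [hK, abs_sub_comm]
  have hw : mApp (A + μ • (1 : Matrix (Fin d) (Fin d) ℝ))⁻¹ (mApp A y)
        - mApp (A + ν • (1 : Matrix (Fin d) (Fin d) ℝ))⁻¹ (mApp A y)
      = ∑ i, (g i * c i) • B i := by
    rw [key_formula hA hμ, key_formula hA hν, ← Finset.sum_sub_distrib]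
    refine Finset.sum_congr rfl fun i _ => ?_
    rw [← sub_smul]
    congr 1
    simp only [hg]
    ring
  have hrepr : ∀ (a : Fin d → ℝ) (i : Fin d), B.repr (∑ j, a j • B j) i = a i := by
    intro a i
    rw [map_sum]
    simp only [map_smul, OrthonormalBasis.repr_self]
    rw [WithLp.ofLp_sum, Finset.sum_apply i Finset.univ _]
    simp [EuclideanSpace.single_apply, PiLp.smul_apply, smul_eq_mul, mul_ite, mul_one, mul_zero]
  have hnorm : ∀ a : Fin d → ℝ, ‖∑ j, a j • B j‖ = Real.sqrt (∑ i, (a i) ^ 2) := by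
    intro a
    rw [← B.repr.norm_map, EuclideanSpace.norm_eq]
    congr 1
    refine Finset.sum_congr rfl fun i _ => ?_
    rw [hrepr]
    rw [Real.norm_eq_abs, sq_abs]
  have hy : ‖y‖ = Real.sqrt (∑ i, (c i) ^ 2) := by
    conv_lhs => rw [← B.sum_repr y]
    exact hnorm c
  rw [hw, hnorm, hy]
  have hsum : (∑ i, (g i * c i) ^ 2) ≤ K ^ 2 * ∑ i, (c i) ^ 2 := by
    rw [Finset.mul_sum]
    refine Finset.sum_le_sum fun i _ => ?_
    rw [mul_pow]
    have : g i ^ 2 ≤ K ^ 2 := by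
      have h := abs_le.mp (hgbound i)
      nlinarith [h.1, h.2]
    exact mul_le_mul_of_nonneg_right this (sq_nonneg _)
  calc Real.sqrt (∑ i, (g i * c i) ^ 2)
      ≤ Real.sqrt (K ^ 2 * ∑ i, (c i) ^ 2) := Real.sqrt_le_sqrt hsum
    _ = K * Real.sqrt (∑ i, (c i) ^ 2) := by
        rw [Real.sqrt_mul (sq_nonneg K), Real.sqrt_sq hK0]
end
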